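/- arXiv:1804.02347 — 6 statements merged into one kernel-verified Lean document; each statement's English description precedes it below -/
import Mathlib

section
/- On a cycle graph with V ≥ 5 vertices where each vertex except one (the hole) is labeled with one of two spin labels, the group of label permutations achievable by sliding the hole around (returning the hole to its start) is generated by a single (V−1)-cycle, hence is cyclic of order V−1 and has order V−1. -/
/-!
Record a configuration reachable from `c` (hole at `0`) as `c ∘ ρ ∘ (· - h)`: the hole sits at
`h`, and `ρ` permutes positions measured relative to the hole. Moving the hole from `h` to
`h ∓ 1` multiplies `ρ` on the right by `loop^{±1}`, so `ρ` stays in the cyclic group generated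
by `loop`, and once the hole is back at `0` the permutation achieved is `ρ` itself. Conversely,
moving the hole `V` steps backwards realises `loop ^ V = loop`, because `loop` is a
`(V - 1)`-cycle: it is the `V`-cycle `x ↦ x - 1` with `0` cut out by the transposition.
-/

/-- A move in the sliding puzzle: the hole at vertex `a` is transposed with the
tile at an adjacent vertex `b`. -/
def PMove {V L : Type*} [DecidableEq V] (adj : V → V → Prop)
    (c c' : V → Option L) : Prop :=
  ∃ a b, adj a b ∧ c a = none ∧ c' = c ∘ Equiv.swap a b

/-- Reachability by a finite sequence of hole moves. -/
def PReach {V L : Type*} [DecidableEq V] (adj : V → V → Prop) :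
    (V → Option L) → (V → Option L) → Prop :=
  Relation.ReflTransGen (PMove adj)

/-- Adjacency on the cycle graph `C_V` with vertices `ZMod V`. -/
def cycAdj (V : ℕ) (i j : ZMod V) : Prop := j = i + 1 ∨ i = j + 1

open Equiv Equiv.Perm Finset

@[simp]
lemma Equiv.subRight_zero {G : Type*} [AddGroup G] : Equiv.subRight (0 : G) = 1 :=
  Equiv.ext sub_zero

namespace CyclePuzzle

def loop (V : ℕ) : Perm (ZMod V) := swap 0 (-1) * Equiv.addRight (-1)

variable {V : ℕ}

lemma addRight_pow_apply {G : Type*} [AddGroup G] (a x : G) (n : ℕ) :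
    (Equiv.addRight a ^ n) x = x + n • a := by
  induction n with
  | zero => simp
  | succ n ih =>
    rw [pow_succ', Perm.mul_apply, ih, coe_addRight, succ_nsmul]
    exact add_assoc _ _ _

lemma neg_one_ne_zero_of_two_le (hV : 2 ≤ V) : (-1 : ZMod V) ≠ 0 := by
  rw [neg_ne_zero, ← Nat.cast_one, Ne, ZMod.natCast_eq_zero_iff]
  exact Nat.not_dvd_of_pos_of_lt one_pos hV

lemma support_addRight_neg_one [NeZero V] (hV : 2 ≤ V) :
    (Equiv.addRight (-1 : ZMod V)).support = univ := by
  ext x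
  simp [neg_one_ne_zero_of_two_le hV]

lemma isCycle_addRight_neg_one [NeZero V] (hV : 2 ≤ V) :
    (Equiv.addRight (-1 : ZMod V)).IsCycle := by
  refine ⟨0, by simp [neg_one_ne_zero_of_two_le hV], fun y _ => ⟨(-y).val, ?_⟩⟩
  rw [zpow_natCast, addRight_pow_apply, nsmul_eq_mul, ZMod.natCast_zmod_val]
  ring

lemma neg_one_add_neg_one_ne_zero (hV : 3 ≤ V) : (-1 : ZMod V) + -1 ≠ 0 := by
  rw [← neg_add, neg_ne_zero, one_add_one_eq_two, ← Nat.cast_ofNat, Ne,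
    ZMod.natCast_eq_zero_iff]
  exact Nat.not_dvd_of_pos_of_lt two_pos hV

lemma support_loop [NeZero V] (hV : 3 ≤ V) : (loop V).support = univ.erase 0 := by
  have h := support_swap_mul_eq (Equiv.addRight (-1 : ZMod V)) 0
    (by simpa using neg_one_add_neg_one_ne_zero hV)
  simp only [coe_addRight, zero_add] at h
  rwa [support_addRight_neg_one (by omega), sdiff_singleton_eq_erase] at h

lemma card_support_loop [NeZero V] (hV : 3 ≤ V) : #(loop V).support = V - 1 := by
  rw [support_loop hV, card_erase_of_mem (mem_univ _), card_univ, ZMod.card]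

lemma isCycle_loop [NeZero V] (hV : 3 ≤ V) : (loop V).IsCycle := by
  have h := (isCycle_addRight_neg_one (V := V) (by omega)).swap_mul (x := 0)
  simp only [coe_addRight, zero_add] at h
  exact h (neg_one_ne_zero_of_two_le (by omega)) (neg_one_add_neg_one_ne_zero hV)

lemma orderOf_loop [NeZero V] (hV : 3 ≤ V) : orderOf (loop V) = V - 1 := by
  rw [(isCycle_loop hV).orderOf, card_support_loop hV]

@[simp] lemma loop_apply_zero : loop V 0 = 0 := by simp [loop]

lemma apply_zero_of_mem_zpowers_loop {ρ : Perm (ZMod V)} (hρ : ρ ∈ Subgroup.zpowers (loop V)) :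
    ρ 0 = 0 := by
  obtain ⟨n, rfl⟩ := hρ
  exact zpow_apply_eq_self_of_apply_eq_self loop_apply_zero n

lemma addRight_neg_one_mul_subRight (h : ZMod V) :
    Equiv.addRight (-1) * Equiv.subRight (h - 1) = Equiv.subRight h := by
  ext x
  simp only [Perm.mul_apply, coe_addRight, subRight_apply]
  ring

lemma subRight_mul_swap_sub_one (h : ZMod V) :
    Equiv.subRight h * swap h (h - 1) = loop V * Equiv.subRight (h - 1) := by
  have hconj := swap_apply_apply (Equiv.subRight h) h (h - 1)
  rw [subRight_apply, subRight_apply, sub_self, sub_sub_cancel_left] at hconj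
  rw [loop, mul_assoc, addRight_neg_one_mul_subRight, hconj, inv_mul_cancel_right]

lemma subRight_mul_swap_add_one (h : ZMod V) :
    Equiv.subRight h * swap h (h + 1) = (loop V)⁻¹ * Equiv.subRight (h + 1) := by
  have h' := subRight_mul_swap_sub_one (V := V) (h + 1)
  rw [add_sub_cancel_right] at h'
  rw [eq_inv_mul_iff_mul_eq, ← mul_assoc, ← h', swap_comm, mul_swap_mul_self]

lemma pmove_comp_mul_loop {L : Type*} (c : ZMod V → Option L) (hc : c 0 = none)
    {ρ : Perm (ZMod V)} (hρ : ρ 0 = 0) (h : ZMod V) :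
    PMove (cycAdj V) (c ∘ ⇑(ρ * Equiv.subRight h))
      (c ∘ ⇑(ρ * loop V * Equiv.subRight (h - 1))) := by
  refine ⟨h, h - 1, Or.inr (sub_add_cancel h 1).symm, by simp [hρ, hc], ?_⟩
  rw [mul_assoc, ← subRight_mul_swap_sub_one, ← mul_assoc]
  rfl

lemma preach_comp_loop_pow_mul_subRight {L : Type*} (c : ZMod V → Option L) (hc : c 0 = none)
    (j : ℕ) : PReach (cycAdj V) c (c ∘ ⇑(loop V ^ j * Equiv.subRight (-j : ZMod V))) := by
  induction j with
  | zero =>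
    rw [pow_zero, one_mul, Nat.cast_zero, neg_zero, Equiv.subRight_zero, Perm.coe_one,
      Function.comp_id]
    exact Relation.ReflTransGen.refl
  | succ j ih =>
    rw [Nat.cast_succ, neg_add', pow_succ]
    exact ih.tail <|
      pmove_comp_mul_loop c hc (pow_apply_eq_self_of_apply_eq_self loop_apply_zero j) _

lemma preach_comp_loop_pow [NeZero V] (hV : 3 ≤ V) {L : Type*} (c : ZMod V → Option L)
    (hc : c 0 = none) (n : ℕ) : PReach (cycAdj V) c (c ∘ ⇑(loop V ^ n)) := by
  have hpow : loop V ^ (V * n) = loop V ^ n := by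
    rw [pow_eq_pow_iff_modEq, orderOf_loop hV]
    simpa using (Nat.modEq_sub (by omega : 1 ≤ V)).mul_right n
  simpa [hpow] using preach_comp_loop_pow_mul_subRight c hc (V * n)

lemma exists_eq_comp_of_preach {L : Type*} {c c' : ZMod V → Option L}
    (hc : ∀ x, c x = none ↔ x = 0) (hreach : PReach (cycAdj V) c c') :
    ∃ ρ ∈ Subgroup.zpowers (loop V), ∃ h : ZMod V,
      c' = c ∘ ⇑(ρ * Equiv.subRight h) := by
  induction hreach with
  | refl => exact ⟨1, one_mem _, 0, by ext; simp⟩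
  | tail _ hmove ih =>
    obtain ⟨ρ, hρ, h, rfl⟩ := ih
    obtain ⟨a, b, hab, ha, rfl⟩ := hmove
    have hρ0 := apply_zero_of_mem_zpowers_loop hρ
    obtain rfl : a = h := by
      have hρa : ρ (a - h) = ρ 0 := by simpa [hc, hρ0] using ha
      exact sub_eq_zero.mp (ρ.injective hρa)
    rcases hab with rfl | hb
    · refine ⟨ρ * (loop V)⁻¹, mul_mem hρ (inv_mem (Subgroup.mem_zpowers _)), a + 1, ?_⟩
      rw [mul_assoc, ← subRight_mul_swap_add_one]
      rfl
    · obtain rfl : b = a - 1 := eq_sub_of_add_eq hb.symm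
      refine ⟨ρ * loop V, mul_mem hρ (Subgroup.mem_zpowers _), a - 1, ?_⟩
      rw [mul_assoc, ← subRight_mul_swap_sub_one]
      rfl

end CyclePuzzle

open CyclePuzzle in
/-- On a cycle with `V ≥ 5` vertices, with distinguishable tiles and the hole at `0`,
the permutations of tiles achievable by hole moves returning the hole to its start
form exactly the cyclic group generated by the `(V-1)`-cycle `r` obtained by moving
the hole once around the cycle; in particular this group is cyclic of order `V - 1`. -/
theorem stmt0 (V : ℕ) [NeZero V] (hV : 5 ≤ V)
    (c0 : ZMod V → Option (ZMod V))
    (hc0 : c0 = fun v => if v = 0 then none else some v)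
    (r : Equiv.Perm (ZMod V))
    (hr : r = Equiv.swap (0 : ZMod V) (-1) * Equiv.addRight (-1 : ZMod V)) :
    r.IsCycle ∧ r.support.card = V - 1 ∧
    {σ : Equiv.Perm (ZMod V) | σ 0 = 0 ∧ PReach (cycAdj V) c0 (c0 ∘ ⇑σ)} =
      ↑(Subgroup.zpowers r) ∧
    orderOf r = V - 1 := by
  obtain rfl : r = loop V := hr
  have hV3 : 3 ≤ V := by omega
  refine ⟨isCycle_loop hV3, card_support_loop hV3, ?_, orderOf_loop hV3⟩
  have hc0_hole : ∀ x, c0 x = none ↔ x = 0 := by simp [hc0]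
  have hc0_inj : c0.Injective := by
    intro x y hxy
    subst hc0
    dsimp only at hxy
    split_ifs at hxy <;> simp_all
  ext σ
  constructor
  · rintro ⟨hσ0, hreach⟩
    obtain ⟨ρ, hρ, h, hσ⟩ := exists_eq_comp_of_preach hc0_hole hreach
    obtain rfl : σ = ρ * Equiv.subRight h := Perm.ext fun x => hc0_inj (congrFun hσ x)
    obtain rfl : h = 0 := by
      have h0 : ρ (0 - h) = ρ 0 := by rw [apply_zero_of_mem_zpowers_loop hρ]; exact hσ0
      simpa using ρ.injective h0
    simpa using hρ
  · intro hσ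
    obtain ⟨n, rfl⟩ := mem_powers_iff_mem_zpowers.mpr hσ
    exact ⟨pow_apply_eq_self_of_apply_eq_self loop_apply_zero n,
      preach_comp_loop_pow hV3 c0 ((hc0_hole 0).mpr rfl) n⟩
end

section
/- On a cycle graph with V ≥ 5 vertices, the sliding puzzle with two spin labels is not connected: there exist two configurations with the same numbers of up and down labels and the same hole position that cannot be transformed into each other by hole moves, provided each label occurs at least twice. -/
/-!
A hole move does not change the cyclic word of labels read around the cycle with the hole
skipped; it only shifts one label by one vertex. Hence the positions `i` whose label is followed,
in that word, by the same label are just permuted by the move, and whether such a position exists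
is invariant. The configurations `∘↑↑↓↓…` and `∘↑↓↑↓…` (hole at `0`), which differ by transposing
the labels at `2` and `3`, have the same label counts, but only the first has a position with
`↑` followed by `↑`.
-/

open Equiv Finset

section Hole

variable {α L : Type*}

def HoleAt (c : α → Option L) (a : α) : Prop := ∀ v, c v = none ↔ v = a

variable [DecidableEq α] {c c' : α → Option L} {a : α}

theorem HoleAt.comp_swap (hc : HoleAt c a) (b : α) : HoleAt (c ∘ swap a b) b := fun v => by
  rw [Function.comp_apply, hc, swap_apply_eq_iff, swap_apply_left]

theorem HoleAt.exists_of_pMove {adj : α → α → Prop} (hc : HoleAt c a) (hm : PMove adj c c') :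
    ∃ b, HoleAt c' b := by
  obtain ⟨a', b, -, ha', rfl⟩ := hm
  obtain rfl : a = a' := ((hc a').mp ha').symm
  exact ⟨b, hc.comp_swap b⟩

end Hole

section Cycle

variable {V : ℕ} {L : Type*} {c c' : ZMod V → Option L} {a : ZMod V}

def IsDoubledAt (c : ZMod V → Option L) (x : L) (i : ZMod V) : Prop :=
  c i = some x ∧ (c (i + 1) = some x ∨ (c (i + 1) = none ∧ c (i + 2) = some x))

theorem isDoubledAt_comp_swap_add_one (hc : HoleAt c a) (x : L) (i : ZMod V) :
    IsDoubledAt (c ∘ swap a (a + 1)) x i ↔ IsDoubledAt c x (swap a (a + 1) i) := by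
  unfold IsDoubledAt HoleAt at *
  simp only [Function.comp_apply, swap_apply_def]
  -- only the windows `i, i + 1, i + 2` meeting `{a, a + 1}` change, and they are checked by cases
  grind

theorem isDoubledAt_comp_swap (hc : HoleAt c a) {b : ZMod V} (hab : cycAdj V a b) (x : L)
    (i : ZMod V) : IsDoubledAt (c ∘ swap a b) x i ↔ IsDoubledAt c x (swap a b i) := by
  rcases hab with rfl | rfl
  · exact isDoubledAt_comp_swap_add_one hc x i
  · -- moving the hole back from `b` to `b + 1` is a move of the first kind
    have h := isDoubledAt_comp_swap_add_one (hc.comp_swap b) x (swap (b + 1) b i)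
    rw [swap_comm b, swap_apply_self] at h
    simpa [Function.comp_def, swap_apply_self] using h.symm

theorem exists_isDoubledAt_iff_of_pMove (hc : HoleAt c a) (hm : PMove (cycAdj V) c c') (x : L) :
    (∃ i, IsDoubledAt c' x i) ↔ ∃ i, IsDoubledAt c x i := by
  obtain ⟨a', b, hab, ha', rfl⟩ := hm
  obtain rfl : a = a' := ((hc a').mp ha').symm
  exact (swap a b).exists_congr (isDoubledAt_comp_swap hc hab x)

theorem exists_isDoubledAt_of_pReach (hc : HoleAt c a) (hr : PReach (cycAdj V) c c') {x : L}
    (h : ∃ i, IsDoubledAt c x i) : ∃ i, IsDoubledAt c' x i := by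
  suffices (∃ b, HoleAt c' b) ∧ ∃ i, IsDoubledAt c' x i from this.2
  induction hr with
  | refl => exact ⟨⟨a, hc⟩, h⟩
  | tail _ hm ih =>
    obtain ⟨⟨b, hb⟩, hdoubled⟩ := ih
    exact ⟨hb.exists_of_pMove hm, (exists_isDoubledAt_iff_of_pMove hb hm x).mpr hdoubled⟩

end Cycle

/-- On a cycle with `V ≥ 5` vertices, the two-label sliding puzzle is not connected:
there are two configurations with the same hole position and the same numbers of
up- and down-labels, each label occurring at least twice, which are not related
by any sequence of hole moves. -/
theorem stmt2 (V : ℕ) [NeZero V] (hV : 5 ≤ V) :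
    ∃ c c' : ZMod V → Option Bool,
      (∃ h : ZMod V, (∀ v, c v = none ↔ v = h) ∧ (∀ v, c' v = none ↔ v = h)) ∧
      (Finset.univ.filter fun v => c v = some true).card =
        (Finset.univ.filter fun v => c' v = some true).card ∧
      (Finset.univ.filter fun v => c v = some false).card =
        (Finset.univ.filter fun v => c' v = some false).card ∧
      2 ≤ (Finset.univ.filter fun v => c v = some true).card ∧
      2 ≤ (Finset.univ.filter fun v => c v = some false).card ∧
      ¬ PReach (cycAdj V) c c' := by
  -- `grind` tells the numerals `0, …, 4` of `ZMod V` apart through their values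
  have h0 : (0 : ZMod V).val = 0 := ZMod.val_zero
  have h1 : (1 : ZMod V).val = 1 := by
    simpa using ZMod.val_natCast_of_lt (n := V) (a := 1) (by omega)
  have h2 : (2 : ZMod V).val = 2 := ZMod.val_ofNat_of_lt (a := 2) (by omega)
  have h3 : (3 : ZMod V).val = 3 := ZMod.val_ofNat_of_lt (a := 3) (by omega)
  have h4 : (4 : ZMod V).val = 4 := ZMod.val_ofNat_of_lt (a := 4) (by omega)
  set c : ZMod V → Option Bool :=
    fun v => if v = 0 then none else if v = 1 ∨ v = 2 then some true else some false
  have hc : HoleAt c 0 := by grind [HoleAt]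
  have hc' : HoleAt (c ∘ swap 2 3) 0 := by grind [HoleAt]
  have hcount : ∀ x, #{v | c v = x} = #{v | (c ∘ swap 2 3) v = x} := fun x =>
    card_equiv (swap 2 3) (by simp)
  refine ⟨c, c ∘ swap 2 3, ⟨0, hc, hc'⟩, hcount _, hcount _, ?_, ?_, ?_⟩
  · exact card_le_card (s := {1, 2}) (by grind) |>.trans' (by grind)
  · exact card_le_card (s := {3, 4}) (by grind) |>.trans' (by grind)
  · intro hr
    have h12 : (1 : ZMod V) + 1 = 2 := one_add_one_eq_two
    have h34 : (3 : ZMod V) + 1 = 4 := by norm_num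
    obtain ⟨i, hi⟩ := exists_isDoubledAt_of_pReach hc hr (x := true) ⟨1, by grind [IsDoubledAt]⟩
    grind [IsDoubledAt]
end

section
/- If a connected graph G is separable at a cut vertex O (i.e., removing O disconnects G into nonempty parts A and B), then in the sliding puzzle on G no sequence of hole moves can move a tile initially in A to a vertex in B. -/
/-- Invariant: hole is unique, tile `t` is unique, and either every occurrence of
tile `t` is in `A`, or tile `t` is at `O` and every hole is in `A`. -/
def SlideInv {Vt : Type*} (A : Set Vt) (O t : Vt) (c : Vt → Option Vt) : Prop :=
  (∀ v w, c v = none → c w = none → v = w) ∧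
  (∀ v w, c v = some t → c w = some t → v = w) ∧
  ((∀ v, c v = some t → v ∈ A) ∨ (c O = some t ∧ ∀ v, c v = none → v ∈ A))

lemma slideInv_step {Vt : Type*} [DecidableEq Vt] (G : SimpleGraph Vt)
    (O : Vt) (A B : Set Vt)
    (hpart : A ∪ B = {v | v ≠ O})
    (hsep : ∀ a ∈ A, ∀ b ∈ B, ¬ G.Adj a b) (t : Vt)
    {c c' : Vt → Option Vt} (hm : PMove G.Adj c c')
    (hI : SlideInv A O t c) : SlideInv A O t c' := by
  obtain ⟨a, b, hab, ha, rfl⟩ := hm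
  obtain ⟨hu, hut, hcase⟩ := hI
  have hmem : ∀ x : Vt, x ≠ O → x ∉ B → x ∈ A := by
    intro x hxO hxB
    have hx : x ∈ A ∪ B := by rw [hpart]; exact hxO
    rcases hx with h | h
    · exact h
    · exact absurd h hxB
  have hAO : ∀ x, x ∈ A → x ≠ O := by
    intro x hx
    have : x ∈ A ∪ B := Or.inl hx
    rw [hpart] at this; exact this
  have hba : b ≠ a := hab.ne'
  refine ⟨?_, ?_, ?_⟩
  · intro v w hv hw
    exact (Equiv.swap a b).injective (hu _ _ hv hw)
  · intro v w hv hw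
    exact (Equiv.swap a b).injective (hut _ _ hv hw)
  · rcases hcase with hAll | ⟨hO, hhole⟩
    · by_cases hcrit : a = O ∧ c b = some t
      · obtain ⟨haO, htb⟩ := hcrit
        right
        constructor
        · subst haO
          simpa [Function.comp, Equiv.swap_apply_left] using htb
        · intro v hv
          simp only [Function.comp] at hv
          have hsw : Equiv.swap a b v = a := hu _ _ hv ha
          have : v = Equiv.swap a b a := by
            have := congrArg (Equiv.swap a b) hsw
            simpa [Equiv.swap_apply_self] using this
          rw [Equiv.swap_apply_left] at this
          subst this
          exact hAll _ htb
      · left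
        intro v hv
        simp only [Function.comp] at hv
        rcases eq_or_ne v a with rfl | hva
        · rw [Equiv.swap_apply_left] at hv
          have hbA : b ∈ A := hAll _ hv
          have hvO : v ≠ O := fun hvO => hcrit ⟨hvO, hv⟩
          exact hmem v hvO (fun hB => hsep b hbA v hB hab.symm)
        · rcases eq_or_ne v b with rfl | hvb
          · rw [Equiv.swap_apply_right, ha] at hv; cases hv
          · rw [Equiv.swap_apply_of_ne_of_ne hva hvb] at hv
            exact hAll _ hv
    · have haA : a ∈ A := hhole a ha
      rcases eq_or_ne b O with rfl | hbO
      · left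
        intro v hv
        simp only [Function.comp] at hv
        have hsw : Equiv.swap a b v = b := hut _ _ hv hO
        have : v = Equiv.swap a b b := by
          have := congrArg (Equiv.swap a b) hsw
          simpa [Equiv.swap_apply_self] using this
        rw [Equiv.swap_apply_right] at this
        subst this
        exact haA
      · have hbB : b ∉ B := fun hB => hsep a haA b hB hab
        have hbA : b ∈ A := hmem b hbO hbB
        right
        constructor
        · have hOa : O ≠ a := fun h => hAO a haA h.symm
          have hOb : O ≠ b := fun h => hbO h.symm
          simpa [Function.comp, Equiv.swap_apply_of_ne_of_ne hOa hOb] using hO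
        · intro v hv
          simp only [Function.comp] at hv
          have hsw : Equiv.swap a b v = a := hu _ _ hv ha
          have : v = Equiv.swap a b a := by
            have := congrArg (Equiv.swap a b) hsw
            simpa [Equiv.swap_apply_self] using this
          rw [Equiv.swap_apply_left] at this
          subst this
          exact hbA

/-- If a connected graph `G` is separable at a cut vertex `O`, i.e. the vertices other
than `O` split into nonempty sets `A` and `B` with no edges between them, then in the
sliding puzzle on `G` (tiles named by their initial vertices, hole at `h`) no sequence
of hole moves can bring a tile initially in `A` to a vertex of `B`. -/
theorem stmt3 {Vt : Type*} [Fintype Vt] [DecidableEq Vt]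
    (G : SimpleGraph Vt) (hconn : G.Connected)
    (O : Vt) (A B : Set Vt)
    (hA : A.Nonempty) (hB : B.Nonempty)
    (hdisj : Disjoint A B)
    (hpart : A ∪ B = {v | v ≠ O})
    (hsep : ∀ a ∈ A, ∀ b ∈ B, ¬ G.Adj a b)
    (h : Vt) (c0 : Vt → Option Vt)
    (hc0 : c0 = fun v => if v = h then none else some v)
    (t : Vt) (ht : t ∈ A)
    (c' : Vt → Option Vt) (hr : PReach G.Adj c0 c') :
    ∀ b ∈ B, c' b ≠ some t := by
  have hBO : ∀ x, x ∈ B → x ≠ O := by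
    intro x hx
    have : x ∈ A ∪ B := Or.inr hx
    rw [hpart] at this; exact this
  have hinv0 : SlideInv A O t c0 := by
    subst hc0
    refine ⟨?_, ?_, Or.inl ?_⟩
    · intro v w hv hw
      by_cases hv' : v = h <;> by_cases hw' : w = h <;> simp_all
    · intro v w hv hw
      by_cases hv' : v = h <;> by_cases hw' : w = h <;> simp_all
    · intro v hv
      by_cases hv' : v = h <;> simp_all
  have hinv : SlideInv A O t c' := by
    induction hr with
    | refl => exact hinv0
    | tail _ hstep ih => exact slideInv_step G O A B hpart hsep t hstep ih
  intro b hb hbt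
  obtain ⟨_, hut, hcase⟩ := hinv
  rcases hcase with hAll | ⟨hO, _⟩
  · exact hdisj.le_bot ⟨hAll b hbt, hb⟩
  · exact hBO b hb (hut b O hbt hO)
end

section
/- If the alternating group A_n acts on labelings f : Fin n → L by permuting positions, then two labelings are in the same A_n-orbit if and only if they have the same multiset of labels, provided some label is repeated (f is not injective); for injective labelings with n ≥ 2, the S_n-orbit splits into exactly two A_n-orbits. -/
/-!
Two labelings have the same multiset of labels exactly when their fibres over each label have the
same size, i.e. when they differ by a permutation. If two positions `i ≠ j` carry the same label,
then `f ∘ swap i j = f`, so any odd permutation can be traded for an even one. If `f` is injective,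
`f ∘ σ` determines `σ`; hence `f` and `f ∘ swap i j` lie in different `A_n`-orbits, and every
`f ∘ σ` lies in one of them because `σ` or `swap i j * σ` is even.
-/

open Equiv Finset

theorem Multiset.map_univ_eq_iff_exists_perm {ι L : Type*} [Fintype ι] {f g : ι → L} :
    Multiset.map g univ.val = Multiset.map f univ.val ↔ ∃ σ : Perm ι, g = f ∘ σ := by
  classical
  constructor
  · intro h
    have hcard (c : L) : Fintype.card {a // g a = c} = Fintype.card {a // f a = c} := by
      have := congrArg (Multiset.count c) h
      simp only [Multiset.count_map] at this
      simpa [Fintype.card_subtype, Finset.card, Finset.filter_val, eq_comm] using this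
    exact ⟨ofFiberEquiv fun c => Fintype.equivOfCardEq (hcard c),
      funext fun a => (ofFiberEquiv_map _ a).symm⟩
  · rintro ⟨σ, rfl⟩
    rw [← Multiset.map_map, map_univ_val_equiv σ]

section

variable {α L : Type*} [DecidableEq α]

theorem Equiv.comp_swap_eq_self {f : α → L} {i j : α} (h : f i = f j) : f ∘ swap i j = f := by
  funext x
  rcases eq_or_ne x i with rfl | hxi
  · simp [h]
  rcases eq_or_ne x j with rfl | hxj
  · simp [h]
  · simp [swap_apply_of_ne_of_ne hxi hxj]

variable [Fintype α]

theorem Equiv.Perm.mem_alternatingGroup_or_swap_mul_mem (σ : Perm α) {i j : α} (hij : i ≠ j) :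
    σ ∈ alternatingGroup α ∨ swap i j * σ ∈ alternatingGroup α := by
  simp only [Perm.mem_alternatingGroup, map_mul, Perm.sign_swap hij]
  rcases Int.units_eq_one_or (Perm.sign σ) with h | h <;> simp [h]

theorem exists_mem_alternatingGroup_comp_eq {f : α → L} (hf : ¬ Function.Injective f)
    (σ : Perm α) : ∃ τ ∈ alternatingGroup α, f ∘ τ = f ∘ σ := by
  obtain ⟨i, j, hfij, hij⟩ : ∃ i j, f i = f j ∧ i ≠ j := by
    simpa [Function.Injective] using hf
  rcases σ.mem_alternatingGroup_or_swap_mul_mem hij with hσ | hσ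
  · exact ⟨σ, hσ, rfl⟩
  · refine ⟨swap i j * σ, hσ, ?_⟩
    rw [Perm.coe_mul, ← Function.comp_assoc, comp_swap_eq_self hfij]

theorem mem_alternatingGroup_or_comp_eq_comp_swap_comp (f : α → L) (σ : Perm α) {i j : α}
    (hij : i ≠ j) : σ ∈ alternatingGroup α ∨
      ∃ τ ∈ alternatingGroup α, f ∘ σ = (f ∘ swap i j) ∘ τ := by
  refine (σ.mem_alternatingGroup_or_swap_mul_mem hij).imp_right fun hσ => ⟨_, hσ, ?_⟩
  funext x
  simp

theorem not_exists_mem_alternatingGroup_comp_swap_eq {f : α → L} (hf : Function.Injective f)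
    {i j : α} (hij : i ≠ j) : ¬ ∃ τ ∈ alternatingGroup α, f ∘ swap i j = f ∘ τ := by
  rintro ⟨τ, hτ, hfτ⟩
  have : swap i j = τ := DFunLike.coe_injective (hf.comp_left hfτ)
  rw [Perm.mem_alternatingGroup, ← this, Perm.sign_swap hij] at hτ
  exact absurd hτ (by decide)

end

/-- Orbits of the alternating group on labelings `f : Fin n → L`:
if `f` is not injective, two labelings lie in the same `A_n`-orbit iff they have the
same multiset of labels; if `f` is injective and `n ≥ 2`, the `S_n`-orbit of `f`
splits into exactly two `A_n`-orbits. -/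
theorem stmt7 {n : ℕ} {L : Type*} (f : Fin n → L) :
    (¬ Function.Injective f →
      ∀ g : Fin n → L,
        ((∃ τ ∈ alternatingGroup (Fin n), g = f ∘ ⇑τ) ↔
          Multiset.map g Finset.univ.val = Multiset.map f Finset.univ.val)) ∧
    (Function.Injective f → 2 ≤ n →
      ∃ g₁ g₂ : Fin n → L,
        (∃ σ : Equiv.Perm (Fin n), g₁ = f ∘ ⇑σ) ∧
        (∃ σ : Equiv.Perm (Fin n), g₂ = f ∘ ⇑σ) ∧
        (¬ ∃ τ ∈ alternatingGroup (Fin n), g₂ = g₁ ∘ ⇑τ) ∧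
        ∀ g : Fin n → L, (∃ σ : Equiv.Perm (Fin n), g = f ∘ ⇑σ) →
          (∃ τ ∈ alternatingGroup (Fin n), g = g₁ ∘ ⇑τ) ∨
          (∃ τ ∈ alternatingGroup (Fin n), g = g₂ ∘ ⇑τ)) := by
  refine ⟨fun hf g => ?_, fun hf hn => ?_⟩
  · rw [Multiset.map_univ_eq_iff_exists_perm]
    refine ⟨fun ⟨τ, _, hg⟩ => ⟨τ, hg⟩, ?_⟩
    rintro ⟨σ, rfl⟩
    obtain ⟨τ, hτ, hfτ⟩ := exists_mem_alternatingGroup_comp_eq hf σ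
    exact ⟨τ, hτ, hfτ.symm⟩
  · have : Nontrivial (Fin n) := Fin.nontrivial_iff_two_le.mpr hn
    obtain ⟨i, j, hij⟩ := exists_pair_ne (Fin n)
    refine ⟨f, f ∘ swap i j, ⟨1, rfl⟩, ⟨swap i j, rfl⟩,
      not_exists_mem_alternatingGroup_comp_swap_eq hf hij, ?_⟩
    rintro g ⟨σ, rfl⟩
    exact (mem_alternatingGroup_or_comp_eq_comp_swap_comp f σ hij).imp_left fun hσ => ⟨σ, hσ, rfl⟩
end

section
/- Let H be a real symmetric n×n matrix with H_{ij} ≤ 0 for all i ≠ j, and suppose H is irreducible (for every i, j there exists N ≥ 1 with (H^N)_{ij} ≠ 0). Then the lowest eigenvalue of H is simple and there is a corresponding eigenvector with all entries strictly positive. -/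
/-!
Let `μ` be the least eigenvalue of `H`, so that `H - μ • 1` is positive semidefinite. Because the
off-diagonal entries are nonpositive, passing from `x` to `|x|` can only lower the quadratic form
of `H - μ • 1`; as that form is nonnegative and vanishes exactly on its kernel, `|x|` is a
`μ`-eigenvector whenever `x` is. For a nonnegative `μ`-eigenvector `u`, a coordinate `i` with
`u i = 0` forces `H i j = 0` whenever `u j ≠ 0`, so every power of `H` vanishes on the block
from the zero set of `u` to its complement, and irreducibility makes `u` either zero or strictly
positive. Applying this to
`|w - a • v|`, with `a` chosen so that `w - a • v` vanishes at one coordinate, gives simplicity.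
-/

open Matrix

namespace Matrix

variable {ι : Type*} [Fintype ι]

theorem dotProduct_mulVec_abs_le {A : Matrix ι ι ℝ} (hA : ∀ i j, i ≠ j → A i j ≤ 0)
    (x : ι → ℝ) : |x| ⬝ᵥ A *ᵥ |x| ≤ x ⬝ᵥ A *ᵥ x := by
  simp only [dot_mulVec_eq_sum_sum, Pi.abs_apply]
  refine Finset.sum_le_sum fun j _ => Finset.sum_le_sum fun i _ => ?_
  rcases eq_or_ne i j with rfl | hij
  · rw [mul_right_comm, abs_mul_abs_self, mul_right_comm]
  · rw [mul_right_comm, ← abs_mul, mul_right_comm (x i)]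
    exact mul_le_mul_of_nonpos_right (le_abs_self _) (hA i j hij)

theorem PosSemidef.mulVec_abs_eq_zero {A : Matrix ι ι ℝ} (hA : A.PosSemidef)
    (hoff : ∀ i j, i ≠ j → A i j ≤ 0) {x : ι → ℝ} (hx : A *ᵥ x = 0) : A *ᵥ |x| = 0 := by
  have hx' : x ⬝ᵥ A *ᵥ x = 0 := by rw [hx, dotProduct_zero]
  refine (hA.dotProduct_mulVec_zero_iff |x|).1 (le_antisymm ?_ (hA.dotProduct_mulVec_nonneg _))
  simpa only [star_trivial, hx'] using dotProduct_mulVec_abs_le hoff x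

theorem apply_eq_zero_of_mulVec_eq_smul {H : Matrix ι ι ℝ} (hoff : ∀ i j, i ≠ j → H i j ≤ 0)
    {μ : ℝ} {u : ι → ℝ} (hu : 0 ≤ u) (hHu : H *ᵥ u = μ • u) {i j : ι} (hi : u i = 0)
    (hj : u j ≠ 0) : H i j = 0 := by
  have hsum : ∑ k, H i k * u k = 0 := by
    simpa [mulVec, dotProduct, hi] using congrFun hHu i
  have hterm : ∀ k ∈ Finset.univ, H i k * u k ≤ 0 := fun k _ => by
    rcases eq_or_ne i k with rfl | hik
    · rw [hi, mul_zero]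
    · exact mul_nonpos_of_nonpos_of_nonneg (hoff i k hik) (hu k)
  exact (mul_eq_zero.1 ((Finset.sum_eq_zero_iff_of_nonpos hterm).1 hsum j
    (Finset.mem_univ j))).resolve_right hj

variable [DecidableEq ι]

theorem pow_apply_eq_zero_of_forall_mem_of_notMem {R : Type*} [Semiring R] {A : Matrix ι ι R}
    {S : Set ι} (hA : ∀ i ∈ S, ∀ j ∉ S, A i j = 0) (N : ℕ) :
    ∀ i ∈ S, ∀ j ∉ S, (A ^ N) i j = 0 := by
  induction N with
  | zero =>
    intro i hi j hj
    exact one_apply_ne (ne_of_mem_of_not_mem hi hj)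
  | succ N ih =>
    intro i hi j hj
    rw [pow_succ, mul_apply]
    refine Finset.sum_eq_zero fun k _ => ?_
    by_cases hk : k ∈ S
    · rw [hA k hk j hj, mul_zero]
    · rw [ih i hi k hk, zero_mul]

namespace IsHermitian

variable {H : Matrix ι ι ℝ} (hH : H.IsHermitian)
include hH

theorem posSemidef_sub_smul_one {μ : ℝ} (hμ : ∀ i, μ ≤ hH.eigenvalues i) :
    (H - μ • 1).PosSemidef := by
  rw [posSemidef_iff_isHermitian_and_spectrum_nonneg, ← Algebra.algebraMap_eq_smul_one,
    ← spectrum.sub_singleton_eq, hH.spectrum_real_eq_range_eigenvalues]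
  refine ⟨hH.sub (isHermitian_diagonal _), ?_⟩
  rintro _ ⟨_, ⟨i, rfl⟩, _, rfl, rfl⟩
  exact sub_nonneg.2 (hμ i)

theorem exists_posSemidef_sub_smul_one_and_mulVec_eq_smul [Nonempty ι] :
    ∃ μ : ℝ, (H - μ • 1).PosSemidef ∧ ∃ w, w ≠ 0 ∧ H *ᵥ w = μ • w := by
  obtain ⟨k, hk⟩ := Finite.exists_min hH.eigenvalues
  refine ⟨_, hH.posSemidef_sub_smul_one hk, _, fun h => ?_, hH.mulVec_eigenvectorBasis k⟩
  exact hH.eigenvectorBasis.orthonormal.ne_zero k (by ext i; exact congrFun h i)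

end IsHermitian

section LowestEigenvalue

variable {H : Matrix ι ι ℝ} {μ : ℝ}

theorem sub_smul_one_mulVec_eq_zero_iff {w : ι → ℝ} :
    (H - μ • 1) *ᵥ w = 0 ↔ H *ᵥ w = μ • w := by
  rw [sub_mulVec, smul_mulVec, one_mulVec, sub_eq_zero]

theorem le_of_mulVec_eq_smul (hμ : (H - μ • 1).PosSemidef) {ν : ℝ} {w : ι → ℝ} (hw : w ≠ 0)
    (hHw : H *ᵥ w = ν • w) : μ ≤ ν := by
  have hpos : 0 < w ⬝ᵥ w := by simpa only [star_trivial] using dotProduct_star_self_pos_iff.2 hw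
  have hnonneg : 0 ≤ (ν - μ) * (w ⬝ᵥ w) := by
    simpa only [star_trivial, sub_mulVec, smul_mulVec, one_mulVec, hHw, ← sub_smul,
      dotProduct_smul, smul_eq_mul] using hμ.dotProduct_mulVec_nonneg w
  exact sub_nonneg.1 (nonneg_of_mul_nonneg_left hnonneg hpos)

variable (hoff : ∀ i j, i ≠ j → H i j ≤ 0)
include hoff

theorem abs_mulVec_eq_smul (hμ : (H - μ • 1).PosSemidef) {w : ι → ℝ} (hw : H *ᵥ w = μ • w) :
    H *ᵥ |w| = μ • |w| := by
  refine sub_smul_one_mulVec_eq_zero_iff.1 (hμ.mulVec_abs_eq_zero (fun i j hij => ?_)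
    (sub_smul_one_mulVec_eq_zero_iff.2 hw))
  simpa [one_apply_ne hij] using hoff i j hij

variable (hirr : ∀ i j, ∃ N : ℕ, (H ^ N) i j ≠ 0)
include hirr

theorem eq_zero_of_nonneg_of_mulVec_eq_smul {u : ι → ℝ} (hu : 0 ≤ u) (hHu : H *ᵥ u = μ • u)
    {i : ι} (hi : u i = 0) : u = 0 := by
  by_contra hne
  obtain ⟨j, hj⟩ := Function.ne_iff.1 hne
  obtain ⟨N, hN⟩ := hirr i j
  exact hN (pow_apply_eq_zero_of_forall_mem_of_notMem (S := {k | u k = 0})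
    (fun _ hi' _ hj' => apply_eq_zero_of_mulVec_eq_smul hoff hu hHu hi' hj') N i hi j hj)

theorem eq_zero_of_mulVec_eq_smul (hμ : (H - μ • 1).PosSemidef) {w : ι → ℝ}
    (hw : H *ᵥ w = μ • w) {i : ι} (hi : w i = 0) : w = 0 :=
  (Pi.abs_eq_zero w).1 (eq_zero_of_nonneg_of_mulVec_eq_smul hoff hirr (abs_nonneg w)
    (abs_mulVec_eq_smul hoff hμ hw) (by rw [Pi.abs_apply, hi, abs_zero]))

end LowestEigenvalue

end Matrix

/-- Perron–Frobenius-type theorem: a real symmetric matrix `H` with nonpositive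
off-diagonal entries which is irreducible (for all `i j` some power has
`(H^N) i j ≠ 0`) has a simple lowest eigenvalue `μ` with a strictly positive
eigenvector `v`. -/
theorem stmt9 {ι : Type*} [Fintype ι] [DecidableEq ι] [Nonempty ι]
    (H : Matrix ι ι ℝ) (hsym : H.IsSymm)
    (hoff : ∀ i j, i ≠ j → H i j ≤ 0)
    (hirr : ∀ i j, ∃ N : ℕ, 1 ≤ N ∧ (H ^ N) i j ≠ 0) :
    ∃ (μ : ℝ) (v : ι → ℝ),
      (∀ i, 0 < v i) ∧ H.mulVec v = μ • v ∧
      (∀ (ν : ℝ) (w : ι → ℝ), w ≠ 0 → H.mulVec w = ν • w → μ ≤ ν) ∧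
      (∀ w : ι → ℝ, H.mulVec w = μ • w → ∃ a : ℝ, w = a • v) := by
  obtain ⟨μ, hμ, w₀, hw₀, hHw₀⟩ :=
    (isHermitian_iff_isSymm.2 hsym).exists_posSemidef_sub_smul_one_and_mulVec_eq_smul
  have hirr' : ∀ i j, ∃ N : ℕ, (H ^ N) i j ≠ 0 := fun i j => (hirr i j).imp fun _ => And.right
  have hvanish {w : ι → ℝ} (hw : H *ᵥ w = μ • w) {i : ι} (hi : w i = 0) : w = 0 :=
    eq_zero_of_mulVec_eq_smul hoff hirr' hμ hw hi
  have hv := abs_mulVec_eq_smul hoff hμ hHw₀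
  have hvpos : ∀ i, 0 < |w₀| i := fun i =>
    (abs_nonneg (w₀ i)).lt_of_ne' fun h => hw₀ ((Pi.abs_eq_zero w₀).1 (hvanish hv h))
  refine ⟨μ, |w₀|, hvpos, hv, fun ν w hw hHw => le_of_mulVec_eq_smul hμ hw hHw,
    fun w hw => ?_⟩
  let i : ι := Classical.arbitrary ι
  refine ⟨w i / |w₀| i, sub_eq_zero.1 (hvanish (i := i) ?_ ?_)⟩
  · rw [mulVec_sub, mulVec_smul, hw, hv, smul_sub, smul_comm]
  · rw [Pi.sub_apply, Pi.smul_apply, smul_eq_mul, div_mul_cancel₀ _ (hvpos i).ne', sub_self]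
end

section
/- Cycling the hole once around a cycle of length L in a graph (through L moves returning the hole to its start) induces an (L−1)-cycle on the tiles occupying the other L−1 vertices of that cycle, fixing all other tiles. -/
/-- `PChain adj m c c'` : configuration `c'` is obtained from `c` by exactly `m` moves. -/
def PChain {V L : Type*} [DecidableEq V] (adj : V → V → Prop) :
    ℕ → (V → Option L) → (V → Option L) → Prop
  | 0, c, c' => c = c'
  | m + 1, c, c' => ∃ d, PMove adj c d ∧ PChain adj m d c'

/-- Intermediate configurations: `fcfg v c k` is the configuration after the
hole has been moved along `v 0, v 1, …, v k`. -/
def fcfg {Vt L : Type*} [DecidableEq Vt] {Lc : ℕ} (v : ZMod Lc → Vt)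
    (c : Vt → Option L) : ℕ → (Vt → Option L)
  | 0 => c
  | k + 1 => fcfg v c k ∘ Equiv.swap (v ((k : ℕ) : ZMod Lc)) (v ((k + 1 : ℕ) : ZMod Lc))

lemma pchain_snoc {V L : Type*} [DecidableEq V] (adj : V → V → Prop) :
    ∀ (m : ℕ) (c d e : V → Option L), PChain adj m c d → PMove adj d e →
      PChain adj (m + 1) c e := by
  intro m
  induction m with
  | zero => intro c d e h hm; cases h; exact ⟨e, hm, rfl⟩
  | succ n ih =>
    intro c d e h hm
    obtain ⟨x, hx, hxc⟩ := h
    exact ⟨x, hx, ih _ _ _ hxc hm⟩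

lemma cast_ne_cast {Lc : ℕ} [NeZero Lc] {a b : ℕ} (ha : a < Lc) (hb : b < Lc)
    (hab : a ≠ b) : (a : ZMod Lc) ≠ (b : ZMod Lc) := by
  intro h
  apply hab
  have := congrArg ZMod.val h
  rwa [ZMod.val_cast_of_lt ha, ZMod.val_cast_of_lt hb] at this

lemma fcfg_inv {Vt L : Type*} [DecidableEq Vt] {Lc : ℕ} [NeZero Lc]
    (hL : 3 ≤ Lc) (v : ZMod Lc → Vt) (hinj : Function.Injective v)
    (c : Vt → Option L) (hc : ∀ x, c x = none ↔ x = v 0) :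
    ∀ k, k < Lc →
      fcfg v c k (v ((k : ℕ) : ZMod Lc)) = none ∧
      (∀ j : ℕ, j < k → fcfg v c k (v ((j : ℕ) : ZMod Lc)) = c (v ((j + 1 : ℕ) : ZMod Lc))) ∧
      (∀ j : ℕ, k < j → j < Lc → fcfg v c k (v ((j : ℕ) : ZMod Lc)) = c (v ((j : ℕ) : ZMod Lc))) ∧
      (∀ x, (∀ i, x ≠ v i) → fcfg v c k x = c x) := by
  intro k
  induction k with
  | zero =>
    intro _
    refine ⟨?_, ?_, ?_, ?_⟩
    · simpa [fcfg] using (hc (v 0)).2 (by norm_num)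
    · intro j hj; omega
    · intro j _ _; rfl
    · intro x _; rfl
  | succ k ih =>
    intro hk1
    have hk : k < Lc := by omega
    obtain ⟨ha, hb, hcc, hd⟩ := ih hk
    have hne : ∀ {a b : ℕ}, a < Lc → b < Lc → a ≠ b → v a ≠ v b := by
      intro a b h1 h2 h3 h
      exact cast_ne_cast h1 h2 h3 (hinj h)
    refine ⟨?_, ?_, ?_, ?_⟩
    · show fcfg v c k (Equiv.swap (v ((k : ℕ) : ZMod Lc)) (v ((k + 1 : ℕ) : ZMod Lc))
        (v ((k + 1 : ℕ) : ZMod Lc))) = none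
      rw [Equiv.swap_apply_right]
      exact ha
    · intro j hj
      show fcfg v c k (Equiv.swap (v ((k : ℕ) : ZMod Lc)) (v ((k + 1 : ℕ) : ZMod Lc))
        (v ((j : ℕ) : ZMod Lc))) = _
      rcases Nat.lt_or_ge j k with hjk | hjk
      · rw [Equiv.swap_apply_of_ne_of_ne
          (hne (by omega) hk (by omega)) (hne (by omega) hk1 (by omega))]
        exact hb j hjk
      · have hj : j = k := by omega
        subst hj
        rw [Equiv.swap_apply_left]
        exact hcc (j + 1) (by omega) hk1
    · intro j h1 h2
      show fcfg v c k (Equiv.swap (v ((k : ℕ) : ZMod Lc)) (v ((k + 1 : ℕ) : ZMod Lc))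
        (v ((j : ℕ) : ZMod Lc))) = _
      rw [Equiv.swap_apply_of_ne_of_ne
        (hne h2 hk (by omega)) (hne h2 hk1 (by omega))]
      exact hcc j (by omega) h2
    · intro x hx
      show fcfg v c k (Equiv.swap (v ((k : ℕ) : ZMod Lc)) (v ((k + 1 : ℕ) : ZMod Lc)) x) = _
      rw [Equiv.swap_apply_of_ne_of_ne (hx _) (hx _)]
      exact hd x hx

/-- Cycling the hole once around a cycle `v 0, v 1, …, v (Lc-1), v 0` of length
`Lc` (`Lc` moves returning the hole to `v 0`) induces an `(Lc - 1)`-cycle on the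
tiles occupying the other `Lc - 1` vertices of the cycle, and fixes all tiles
outside the cycle. -/
theorem stmt13 {Vt L : Type*} [DecidableEq Vt]
    (adj : Vt → Vt → Prop) (hsymm : ∀ a b, adj a b → adj b a)
    (Lc : ℕ) [NeZero Lc] (hL : 3 ≤ Lc)
    (v : ZMod Lc → Vt) (hinj : Function.Injective v)
    (hadj : ∀ i : ZMod Lc, adj (v i) (v (i + 1)))
    (c : Vt → Option L) (hc : ∀ x, c x = none ↔ x = v 0) :
    ∃ c' : Vt → Option L,
      PChain adj Lc c c' ∧
      c' (v 0) = none ∧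
      (∀ i : ZMod Lc, i ≠ 0 → i ≠ -1 → c' (v i) = c (v (i + 1))) ∧
      c' (v (-1)) = c (v 1) ∧
      (∀ x : Vt, (∀ i, x ≠ v i) → c' x = c x) := by
  -- the chain property
  have hchain : ∀ m, m ≤ Lc → PChain adj m c (fcfg v c m) := by
    intro m
    induction m with
    | zero => intro _; rfl
    | succ k ih =>
      intro hk1
      have hk : k < Lc := by omega
      refine pchain_snoc adj k c (fcfg v c k) _ (ih (by omega)) ?_
      refine ⟨v ((k : ℕ) : ZMod Lc), v ((k + 1 : ℕ) : ZMod Lc), ?_,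
        (fcfg_inv hL v hinj c hc k hk).1, ?_⟩
      · have h1 : ((k + 1 : ℕ) : ZMod Lc) = ((k : ℕ) : ZMod Lc) + 1 := by push_cast; ring
        rw [h1]
        exact hadj _
      · rfl
  set n := Lc - 1 with hn
  have hn1 : n + 1 = Lc := by omega
  have hcastn1 : ((n + 1 : ℕ) : ZMod Lc) = 0 := by rw [hn1]; exact ZMod.natCast_self Lc
  have hcastn : ((n : ℕ) : ZMod Lc) = -1 := by
    have h : ((n : ℕ) : ZMod Lc) + 1 = 0 := by
      rw [show (1 : ZMod Lc) = ((1 : ℕ) : ZMod Lc) by norm_num, ← Nat.cast_add, hcastn1]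
    linear_combination h
  obtain ⟨ha, hb, -, hd⟩ := fcfg_inv hL v hinj c hc n (by omega)
  refine ⟨fcfg v c (n + 1), ?_, ?_, ?_, ?_, ?_⟩
  · have heq : fcfg v c (n + 1) = fcfg v c Lc := congrArg (fcfg v c) hn1
    rw [heq]
    exact hchain Lc le_rfl
  · show fcfg v c n (Equiv.swap (v ((n : ℕ) : ZMod Lc)) (v ((n + 1 : ℕ) : ZMod Lc))
      (v 0)) = none
    rw [show v ((n + 1 : ℕ) : ZMod Lc) = v 0 from by rw [hcastn1], Equiv.swap_apply_right]
    exact ha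
  · intro i h0 hm1
    have hji : ((i.val : ℕ) : ZMod Lc) = i := ZMod.natCast_rightInverse i
    have hjlt : i.val < Lc := ZMod.val_lt i
    have hj0 : i.val ≠ 0 := by
      intro h; apply h0; rw [← hji, h]; norm_num
    have hjm : i.val ≠ n := by
      intro h; apply hm1; rw [← hji, h, hcastn]
    show fcfg v c n (Equiv.swap (v ((n : ℕ) : ZMod Lc)) (v ((n + 1 : ℕ) : ZMod Lc))
      (v i)) = c (v (i + 1))
    rw [← hji, Equiv.swap_apply_of_ne_of_ne]
    · have hcast : ((i.val + 1 : ℕ) : ZMod Lc) = ((i.val : ℕ) : ZMod Lc) + 1 := by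
        push_cast; ring
      rw [hb i.val (by omega), hcast]
    · intro h
      exact cast_ne_cast hjlt (by omega) hjm (hinj h)
    · rw [hcastn1]
      intro h
      apply hj0
      have h2 := hinj h
      have h3 := congrArg ZMod.val h2
      rwa [ZMod.val_cast_of_lt hjlt, ZMod.val_zero] at h3
  · show fcfg v c n (Equiv.swap (v ((n : ℕ) : ZMod Lc)) (v ((n + 1 : ℕ) : ZMod Lc))
      (v (-1))) = c (v 1)
    rw [← hcastn, Equiv.swap_apply_left, hcastn1]
    have h0 := hb 0 (by omega)
    rw [show ((0 : ℕ) : ZMod Lc) = 0 by norm_num] at h0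
    rw [h0]
    norm_num
  · intro x hx
    show fcfg v c n (Equiv.swap (v ((n : ℕ) : ZMod Lc)) (v ((n + 1 : ℕ) : ZMod Lc)) x) = _
    rw [Equiv.swap_apply_of_ne_of_ne (hx _) (hx _)]
    exact hd x hx
end
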